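/- Under the stated hypotheses, S = 0; that is, the torsion is parallel: S(w;x,y) = 0 for all w, x, y ∈ V. -/
import Mathlib


variable {V : Type*} [AddCommGroup V] [Module ℝ V] [FiniteDimensional ℝ V]

/-- Under the hypotheses modelling a flat metric connection with closed torsion three-form,
the torsion is parallel: `S = 0`. -/
theorem nablaT_eq_zero
    (g : V →ₗ[ℝ] V →ₗ[ℝ] ℝ)
    (hg_symm : ∀ x y : V, g x y = g y x)
    (hg_nondeg : ∀ x : V, (∀ y : V, g x y = 0) → x = 0)
    (T : V →ₗ[ℝ] V →ₗ[ℝ] V)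
    (hT_alt : ∀ x y : V, T x y = - T y x)
    (hT_skew : ∀ x y z : V, g (T x y) z = - g (T x z) y)
    (S : V →ₗ[ℝ] V →ₗ[ℝ] V →ₗ[ℝ] V)
    (hS_alt : ∀ w x y : V, S w x y = - S w y x)
    (hS_skew : ∀ w x y z : V, g (S w x y) z = - g (S w x z) y)
    (hdH : ∀ w x y z : V,
      g (S x y z) w - g (S y x z) w + g (S z x y) w - g (S w x y) z = 0)
    (hBianchi : ∀ w x y z : V,
      g (S x y z) w + g (S y z x) w + g (S z x y) w =
        -(1/2) * (g (T w x) (T y z) + g (T w y) (T z x) + g (T w z) (T x y))) :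
    ∀ w x y : V, S w x y = 0 := by
  -- skew-symmetry of g (S w · ·) · in the middle two arguments
  have hgS : ∀ w x y z : V, g (S w x y) z = - g (S w y x) z := by
    intro w x y z
    rw [hS_alt]
    simp
  -- skew-symmetry of g (T · ·) in first pair (applied under g)
  have hgT1 : ∀ a b c : V, g (T a b) c = - g (T b a) c := by
    intro a b c
    rw [hT_alt]
    simp
  -- the quadratic torsion expression; A(w;x,y,z) equals it
  have hAB : ∀ w x y z : V, g (S w x y) z =
      -(1/2) * (g (T w x) (T y z) + g (T w y) (T z x) + g (T w z) (T x y)) := by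
    intro w x y z
    have hd := hdH w x y z
    have hb := hBianchi w x y z
    have hs := hgS y x z w
    linarith
  -- total antisymmetry of the quadratic expression: three permutation identities
  have hP1 : ∀ w x y z : V,
      g (T x y) (T z w) + g (T x z) (T w y) + g (T x w) (T y z) =
      -(g (T w x) (T y z) + g (T w y) (T z x) + g (T w z) (T x y)) := by
    intro w x y z
    have e1 : g (T x w) (T y z) = - g (T w x) (T y z) := by rw [hT_alt x w]; simp
    have e2 : g (T x y) (T z w) = - g (T w z) (T x y) := by
      rw [hg_symm (T x y) (T z w), hT_alt z w]; simp
    have e3 : g (T x z) (T w y) = - g (T w y) (T z x) := by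
      rw [hg_symm (T x z) (T w y), hT_alt x z]; simp
    linarith
  have hP2 : ∀ w x y z : V,
      g (T y z) (T x w) + g (T y x) (T w z) + g (T y w) (T z x) =
      -(g (T w x) (T y z) + g (T w y) (T z x) + g (T w z) (T x y)) := by
    intro w x y z
    have e1 : g (T y z) (T x w) = - g (T w x) (T y z) := by
      rw [hg_symm (T y z) (T x w), hT_alt x w]; simp
    have e2 : g (T y x) (T w z) = - g (T w z) (T x y) := by
      rw [hg_symm (T y x) (T w z), hT_alt y x]; simp
    have e3 : g (T y w) (T z x) = - g (T w y) (T z x) := by rw [hT_alt y w]; simp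
    linarith
  have hP3 : ∀ w x y z : V,
      g (T z x) (T y w) + g (T z y) (T w x) + g (T z w) (T x y) =
      -(g (T w x) (T y z) + g (T w y) (T z x) + g (T w z) (T x y)) := by
    intro w x y z
    have e1 : g (T z x) (T y w) = - g (T w y) (T z x) := by
      rw [hg_symm (T z x) (T y w), hT_alt y w]; simp
    have e2 : g (T z y) (T w x) = - g (T w x) (T y z) := by
      rw [hg_symm (T z y) (T w x), hT_alt z y]; simp
    have e3 : g (T z w) (T x y) = - g (T w z) (T x y) := by rw [hT_alt z w]; simp
    linarith
  -- conclude g (S w x y) z = 0 for all z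
  have key : ∀ w x y z : V, g (S w x y) z = 0 := by
    intro w x y z
    have h0 := hAB w x y z
    have h1 := hAB x y z w
    have h2 := hAB y z x w
    have h3 := hAB z x y w
    have hd := hdH w x y z
    have hs := hgS y x z w
    have p1 := hP1 w x y z
    have p2 := hP2 w x y z
    have p3 := hP3 w x y z
    linarith
  intro w x y
  exact hg_nondeg _ (key w x y)
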